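/- Let n ∈ ℕ and let A₊, Ã₊ : 𝔻̄ → M_n(ℂ) be continuous maps, holomorphic on 𝔻, with A₊(z), Ã₊(z) invertible for all z ∈ 𝔻̄. Let A₋, Ã₋ : {z ∈ ℂ : |z| ≥ 1} → M_n(ℂ) be continuous maps, holomorphic on {z : |z| > 1}, with invertible values, possessing invertible limits A₋(∞), Ã₋(∞) as |z| → ∞. Let κ₁ ≥ κ₂ ≥ ⋯ ≥ κ_n and ν₁ ≥ ν₂ ≥ ⋯ ≥ ν_n be integers, D(z) = diag(z^{κ₁},…,z^{κ_n}), D̃(z) = diag(z^{ν₁},…,z^{ν_n}). If A₊(z)D(z)A₋(z) = Ã₊(z)D̃(z)Ã₋(z) for all z ∈ 𝕊, then κ_j = ν_j for all j ∈ {1,…,n}, and there exists a map C : ℂ → M_n(ℂ) with C(z) invertible for every z ∈ ℂ, whose entries c_{kj} are polynomial functions of z, such that Ã₊(z) = A₊(z)C(z) for all z ∈ 𝔻̄, Ã₋(z) = D(z)⁻¹C(z)⁻¹D(z)A₋(z) for all z with |z| ≥ 1, and such that for all j,k ∈ {1,…,n}: c_{kj} = 0 if κ_k < κ_j, c_{kj}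 is constant if κ_k = κ_j, and c_{kj} is a polynomial of degree ≤ κ_k − κ_j if κ_k > κ_j. -/

import Mathlib

open Metric Filter

/-!
Put `F = A₊⁻¹ Ã₊`, holomorphic in the disk, and `B = A₋ Ã₋⁻¹`, holomorphic outside it and bounded
at `∞`. On the circle `F D̃ = D B`, i.e. `F_kj = z^(κ_k - ν_j) B_kj`. The right-hand side is
holomorphic outside the disk and grows like `|z|^(κ_k - ν_j)`, so moving the Cauchy integrals of
the Taylor coefficients of `F_kj` to large circles kills every coefficient of index above
`κ_k - ν_j`: `F_kj` is a polynomial `C_kj` on the disk. After the inversion `z ↦ 1/z`, the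
maximum principle applied to `z^(ν_j - κ_k) C_kj - B_kj`, bounded at `∞` and zero on the circle,
gives `C D̃ = D B` outside the disk as well, so `C(z)` is invertible for every `z`. If `κ_r < ν_r`
for some `r`, antitonicity forces `C_kj(0) = 0` for all `k ≥ r ≥ j`, a zero block that makes
`C(0)` singular. Hence `ν ≤ κ`, and symmetrically `κ ≤ ν`.
-/

/-- The diagonal matrix `D(z) = diag(z^{κ₁}, …, z^{κ_n})`. -/
noncomputable def diagZ (n : ℕ) (κ : Fin n → ℤ) (z : ℂ) : Matrix (Fin n) (Fin n) ℂ :=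
  Matrix.diagonal fun i => z ^ κ i

namespace Birkhoff

open Set Topology Asymptotics Bornology Polynomial
open scoped Real

def regularSubring (s t : Set ℂ) : Subring (ℂ → ℂ) where
  carrier := {f | ContinuousOn f s ∧ DifferentiableOn ℂ f t}
  mul_mem' hf hg := ⟨hf.1.mul hg.1, hf.2.mul hg.2⟩
  one_mem' := ⟨continuousOn_const, differentiableOn_const 1⟩
  add_mem' hf hg := ⟨hf.1.add hg.1, hf.2.add hg.2⟩
  zero_mem' := ⟨continuousOn_const, differentiableOn_const 0⟩
  neg_mem' hf := ⟨hf.1.neg, hf.2.neg⟩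

section EntriesInSubring

variable {α R ι : Type*} [CommRing R] [Fintype ι] [DecidableEq ι] {S : Subring (α → R)}
  {M N : α → Matrix ι ι R}

lemma exists_forall_eq_mapMatrix (hM : ∀ i j, (fun x => M x i j) ∈ S) :
    ∃ M' : Matrix ι ι S,
      ∀ x, M x = ((Pi.evalRingHom (fun _ => R) x).comp S.subtype).mapMatrix M' :=
  ⟨fun i j => ⟨_, hM i j⟩, fun x => by ext i j; rfl⟩

lemma det_fun_mem (hM : ∀ i j, (fun x => M x i j) ∈ S) : (fun x => (M x).det) ∈ S := by
  obtain ⟨M', hM'⟩ := exists_forall_eq_mapMatrix hM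
  simp_rw [hM', ← RingHom.map_det]
  exact M'.det.2

lemma adjugate_fun_mem (hM : ∀ i j, (fun x => M x i j) ∈ S) (i j : ι) :
    (fun x => (M x).adjugate i j) ∈ S := by
  obtain ⟨M', hM'⟩ := exists_forall_eq_mapMatrix hM
  simp_rw [hM', ← RingHom.map_adjugate]
  exact (M'.adjugate i j).2

lemma mul_fun_mem (hM : ∀ i j, (fun x => M x i j) ∈ S) (hN : ∀ i j, (fun x => N x i j) ∈ S)
    (i j : ι) : (fun x => (M x * N x) i j) ∈ S := by
  obtain ⟨M', hM'⟩ := exists_forall_eq_mapMatrix hM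
  obtain ⟨N', hN'⟩ := exists_forall_eq_mapMatrix hN
  simp_rw [hM', hN', ← map_mul]
  exact ((M' * N') i j).2

lemma inv_fun_mem (hM : ∀ i j, (fun x => M x i j) ∈ S)
    (hdet : (fun x => Ring.inverse (M x).det) ∈ S) (i j : ι) : (fun x => (M x)⁻¹ i j) ∈ S := by
  simp_rw [Matrix.inv_def, Matrix.smul_apply, smul_eq_mul]
  exact S.mul_mem hdet (adjugate_fun_mem hM i j)

end EntriesInSubring

lemma inverse_mem_regularSubring {s t : Set ℂ} {f : ℂ → ℂ} (hf : f ∈ regularSubring s t)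
    (hts : t ⊆ s) (h0 : ∀ z ∈ s, f z ≠ 0) :
    (fun z => Ring.inverse (f z)) ∈ regularSubring s t := by
  simp only [Ring.inverse_eq_inv']
  exact ⟨hf.1.inv₀ h0, hf.2.inv fun z hz => h0 z (hts hz)⟩

lemma nonsing_inv_fun_mem_regularSubring {ι : Type*} [Fintype ι] [DecidableEq ι] {s t : Set ℂ}
    {M : ℂ → Matrix ι ι ℂ} (hM : ∀ i j, (fun z => M z i j) ∈ regularSubring s t) (hts : t ⊆ s)
    (hu : ∀ z ∈ s, IsUnit (M z)) (i j : ι) : (fun z => (M z)⁻¹ i j) ∈ regularSubring s t :=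
  inv_fun_mem hM (inverse_mem_regularSubring (det_fun_mem hM) hts fun z hz =>
    ((Matrix.isUnit_iff_isUnit_det _).1 (hu z hz)).ne_zero) i j

lemma ne_zero_of_one_le_norm {z : ℂ} (hz : 1 ≤ ‖z‖) : z ≠ 0 :=
  norm_ne_zero_iff.1 (by linarith)

lemma zpow_mem_regularSubring (d : ℤ) :
    (fun z : ℂ => z ^ d) ∈ regularSubring {z | 1 ≤ ‖z‖} {z | 1 < ‖z‖} :=
  ⟨fun _ hz => (continuousAt_zpow₀ _ _ (Or.inl (ne_zero_of_one_le_norm hz))).continuousWithinAt,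
    fun _ hz => (differentiableAt_zpow.2
      (Or.inl (ne_zero_of_one_le_norm (le_of_lt hz)))).differentiableWithinAt⟩

lemma isBigO_zpow_zpow_cobounded {a b : ℤ} (hab : a ≤ b) :
    (fun z : ℂ => z ^ a) =O[cobounded ℂ] fun z => z ^ b := by
  refine IsBigO.of_bound 1 ?_
  filter_upwards [eventually_cobounded_le_norm 1] with z hz
  rw [one_mul, norm_zpow, norm_zpow]
  exact zpow_le_zpow_right₀ hz hab

lemma isBigO_eval_zpow_of_coeff_eq_zero {p : ℂ[X]} {d : ℤ}
    (hp : ∀ m : ℕ, d < m → p.coeff m = 0) :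
    (fun z => p.eval z) =O[cobounded ℂ] fun z => z ^ d := by
  simp_rw [eval_eq_sum_range]
  refine IsBigO.fun_sum fun m _ => ?_
  by_cases hm : d < m
  · simp [hp m hm, isBigO_zero]
  · simp_rw [← zpow_natCast]
    exact (isBigO_zpow_zpow_cobounded (not_lt.1 hm)).const_mul_left _

theorem circleIntegral_eq_zero_of_isBigO_zpow {g : ℂ → ℂ} {d : ℤ}
    (hc : ContinuousOn g {z | 1 ≤ ‖z‖}) (hd : DifferentiableOn ℂ g {z | 1 < ‖z‖})
    (hg : g =O[cobounded ℂ] fun z => z ^ d) (hd2 : d < -1) : ∮ z in C(0, 1), g z = 0 := by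
  have hR : ∀ R, 1 ≤ R → ∮ z in C(0, R), g z = ∮ z in C(0, 1), g z := fun R hR =>
    Complex.circleIntegral_eq_of_differentiable_on_annulus_off_countable one_pos hR
      countable_empty (hc.mono fun z hz => by simpa using hz.2)
      fun z hz => hd.differentiableAt <| (isOpen_lt continuous_const continuous_norm).mem_nhds
        (by simpa using hz.1.2)
  obtain ⟨C, hC⟩ := hg.bound
  rw [← comap_norm_atTop, eventually_comap] at hC
  have hbound : ∀ᶠ R in atTop, ‖∮ z in C(0, 1), g z‖ ≤ 2 * π * C * R ^ (d + 1) := by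
    filter_upwards [hC, eventually_ge_atTop 1] with R hCR hR1
    have hR0 : 0 < R := by linarith
    have hrw : 2 * π * C * R ^ (d + 1) = 2 * π * R * (C * R ^ d) := by
      rw [zpow_add_one₀ hR0.ne']; ring
    rw [← hR R hR1, hrw]
    refine circleIntegral.norm_integral_le_of_norm_le_const hR0.le fun z hz => ?_
    rw [mem_sphere_zero_iff_norm] at hz
    simpa [hz] using hCR z hz
  have hlim : Tendsto (fun R : ℝ => 2 * π * C * R ^ (d + 1)) atTop (𝓝 0) := by
    simpa using (tendsto_zpow_atTop_zero (by omega : d + 1 < 0)).const_mul (2 * π * C)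
  exact norm_le_zero_iff.1 (ge_of_tendsto hlim hbound)

lemma cauchyPowerSeries_coeff_eq_zero {f g : ℂ → ℂ} {d : ℤ} (hfg : EqOn f g (sphere 0 1))
    (hc : ContinuousOn g {z | 1 ≤ ‖z‖}) (hd : DifferentiableOn ℂ g {z | 1 < ‖z‖})
    (hg : g =O[cobounded ℂ] fun z => z ^ d) {m : ℕ} (hm : d < m) :
    (cauchyPowerSeries f 0 1).coeff m = 0 := by
  have hcoeff : (cauchyPowerSeries f 0 1).coeff m =
      (2 * π * Complex.I)⁻¹ • ∮ z in C(0, 1), z ^ (-(m : ℤ) - 1) * g z := by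
    rw [FormalMultilinearSeries.coeff, show (1 : Fin m → ℂ) = fun _ => 1 from rfl,
      cauchyPowerSeries_apply]
    congr 1
    refine circleIntegral.integral_congr zero_le_one fun z hz => ?_
    have hz0 : z ≠ 0 := ne_zero_of_mem_sphere one_ne_zero ⟨z, hz⟩
    simp [hfg hz, zpow_sub₀ hz0, div_eq_mul_inv, mul_assoc]
  obtain ⟨hc', hd'⟩ := (regularSubring _ _).mul_mem (zpow_mem_regularSubring (-(m : ℤ) - 1))
    (show g ∈ regularSubring {z | 1 ≤ ‖z‖} {z | 1 < ‖z‖} from ⟨hc, hd⟩)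
  rw [hcoeff, circleIntegral_eq_zero_of_isBigO_zpow (g := fun z => z ^ (-(m : ℤ) - 1) * g z)
    (d := d - m - 1) hc' hd' ?_ (by omega), smul_zero]
  refine ((isBigO_refl (fun z : ℂ => z ^ (-(m : ℤ) - 1)) _).mul hg).trans_eventuallyEq ?_
  filter_upwards [eventually_ne_cobounded 0] with z hz
  rw [← zpow_add₀ hz]
  ring_nf

lemma exists_polynomial_eqOn_closedBall {f : ℂ → ℂ} (hf : DiffContOnCl ℂ f (ball 0 1)) {N : ℕ}
    (hN : ∀ m, N ≤ m → (cauchyPowerSeries f 0 1).coeff m = 0) :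
    ∃ p : ℂ[X], (∀ m, p.coeff m = (cauchyPowerSeries f 0 1).coeff m) ∧
      EqOn f p.eval (closedBall 0 1) := by
  set a := (cauchyPowerSeries f 0 1).coeff
  set p : ℂ[X] := ∑ m ∈ Finset.range N, monomial m (a m)
  have hp : ∀ m, p.coeff m = a m := by
    intro m
    simp only [p, finsetSum_coeff, coeff_monomial, Finset.sum_ite_eq', Finset.mem_range]
    split_ifs with hm
    · rfl
    · exact (hN m (not_lt.1 hm)).symm
  refine ⟨p, hp, ?_⟩
  have hps : HasFPowerSeriesOnBall f (cauchyPowerSeries f 0 1) 0 1 := by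
    simpa using hf.hasFPowerSeriesOnBall (R := 1) one_pos
  have hball : EqOn f p.eval (ball 0 1) := by
    intro w hw
    have hsum := hps.hasSum (y := w) (by simpa [← ofReal_norm] using hw)
    simp only [zero_add, FormalMultilinearSeries.apply_eq_pow_smul_coeff, smul_eq_mul] at hsum
    rw [hsum.unique (hasSum_sum_of_ne_finset_zero (s := Finset.range N) fun m hm => ?_)]
    · simp [p, eval_finsetSum, mul_comm, a]
    · exact mul_eq_zero_of_right _ (hN m (by simpa using hm))
  rw [← closure_ball (0 : ℂ) one_ne_zero]
  exact hball.of_subset_closure hf.continuousOn p.continuous.continuousOn subset_closure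
    subset_rfl

theorem exists_diffContOnCl_eq_comp_inv {h : ℂ → ℂ}
    (hc : ContinuousOn h {z | 1 ≤ ‖z‖}) (hd : DifferentiableOn ℂ h {z | 1 < ‖z‖})
    (hb : h =O[cobounded ℂ] fun _ => (1 : ℂ)) :
    ∃ k : ℂ → ℂ, DiffContOnCl ℂ k (ball 0 1) ∧ ∀ w ≠ 0, k w = h w⁻¹ := by
  set k : ℂ → ℂ := Function.update (fun w => h w⁻¹) 0 (limUnder (𝓝[≠] 0) fun w => h w⁻¹)
  have hk : ∀ w ≠ 0, k w = h w⁻¹ := fun w hw => Function.update_of_ne hw _ _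
  have hkd : DifferentiableOn ℂ k (ball 0 1) := by
    refine Complex.differentiableOn_update_limUnder_of_isLittleO (ball_mem_nhds 0 one_pos) ?_ ?_
    · rintro w ⟨hw1, hw0 : w ≠ 0⟩
      have : 1 < ‖w⁻¹‖ := by
        rw [norm_inv]; exact one_lt_inv₀ (norm_pos_iff.2 hw0) |>.2 (mem_ball_zero_iff.1 hw1)
      exact ((hd.differentiableAt ((isOpen_lt continuous_const continuous_norm).mem_nhds this)).comp
        w (differentiableAt_inv hw0)).differentiableWithinAt
    · have : (fun w => h w⁻¹ - h 0⁻¹) =O[𝓝[≠] 0] fun _ => (1 : ℂ) :=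
        (hb.comp_tendsto tendsto_inv₀_nhdsNE_zero).sub (isBigO_const_const _ one_ne_zero _)
      exact ((isBigO_one_iff ℂ).1 this).isLittleO_sub_self_inv
  refine ⟨k, ⟨hkd, ?_⟩, hk⟩
  rw [closure_ball (0 : ℂ) one_ne_zero]
  intro w hw
  rcases eq_or_ne w 0 with rfl | hw0
  · exact (hkd.differentiableAt (ball_mem_nhds 0 one_pos)).continuousAt.continuousWithinAt
  · have hinv : ContinuousWithinAt (fun w => h w⁻¹) (closedBall 0 1 \ {0}) w := by
      refine (hc.comp (continuousOn_inv₀.mono fun x hx => hx.2) fun x hx => ?_) w ⟨hw, hw0⟩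
      rw [show (x⁻¹ ∈ {z : ℂ | 1 ≤ ‖z‖}) = (1 ≤ ‖x⁻¹‖) from rfl, norm_inv]
      exact one_le_inv₀ (norm_pos_iff.2 hx.2) |>.2 (mem_closedBall_zero_iff.1 hx.1)
    exact (hinv.congr (fun x hx => hk x hx.2) (hk w hw0)).mono_of_mem_nhdsWithin
      (inter_mem_nhdsWithin _ (isOpen_compl_singleton.mem_nhds hw0))

theorem eqOn_zero_of_exterior {h : ℂ → ℂ}
    (hc : ContinuousOn h {z | 1 ≤ ‖z‖}) (hd : DifferentiableOn ℂ h {z | 1 < ‖z‖})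
    (hb : h =O[cobounded ℂ] fun _ => (1 : ℂ)) (h0 : EqOn h 0 (sphere 0 1)) :
    EqOn h 0 {z | 1 ≤ ‖z‖} := by
  obtain ⟨k, hk, hkh⟩ := exists_diffContOnCl_eq_comp_inv hc hd hb
  have hzero : EqOn k 0 (closedBall 0 1) := by
    rw [← closure_ball (0 : ℂ) one_ne_zero]
    refine Complex.eqOn_closure_of_eqOn_frontier isBounded_ball hk diffContOnCl_const ?_
    intro w hw
    rw [frontier_ball (0 : ℂ) one_ne_zero] at hw
    rw [hkh w (ne_zero_of_mem_sphere one_ne_zero ⟨w, hw⟩)]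
    exact h0 (by simpa using hw)
  intro z (hz : 1 ≤ ‖z‖)
  have := hzero (mem_closedBall_zero_iff.2 (by rw [norm_inv]; exact inv_le_one_of_one_le₀ hz))
  rwa [hkh _ (inv_ne_zero (ne_zero_of_one_le_norm hz)), inv_inv] at this

theorem eqOn_zero_of_exterior_of_isBigO_zpow {h : ℂ → ℂ} {d : ℤ}
    (hc : ContinuousOn h {z | 1 ≤ ‖z‖}) (hd : DifferentiableOn ℂ h {z | 1 < ‖z‖})
    (hb : h =O[cobounded ℂ] fun z => z ^ d) (h0 : EqOn h 0 (sphere 0 1)) :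
    EqOn h 0 {z | 1 ≤ ‖z‖} := by
  obtain ⟨hc', hd'⟩ := (regularSubring _ _).mul_mem
    (show h ∈ regularSubring {z | 1 ≤ ‖z‖} {z | 1 < ‖z‖} from ⟨hc, hd⟩)
    (zpow_mem_regularSubring (-d))
  have hk := eqOn_zero_of_exterior hc' hd' ?_ fun z hz => by simp [h0 hz]
  · intro z (hz : 1 ≤ ‖z‖)
    simpa [ne_zero_of_one_le_norm hz, zpow_ne_zero] using hk hz
  · refine (hb.mul (isBigO_refl _ _)).trans_eventuallyEq ?_
    filter_upwards [eventually_ne_cobounded 0] with z hz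
    rw [← zpow_add₀ hz, add_neg_cancel, zpow_zero]

theorem exists_polynomial_of_eqOn_sphere {f g : ℂ → ℂ} {d : ℤ} (hf : DiffContOnCl ℂ f (ball 0 1))
    (hc : ContinuousOn g {z | 1 ≤ ‖z‖}) (hd : DifferentiableOn ℂ g {z | 1 < ‖z‖})
    (hg : g =O[cobounded ℂ] fun z => z ^ d) (hfg : EqOn f g (sphere 0 1)) :
    ∃ p : ℂ[X], (∀ m : ℕ, d < m → p.coeff m = 0) ∧ EqOn f p.eval (closedBall 0 1) ∧
      EqOn g p.eval {z | 1 ≤ ‖z‖} := by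
  have hvan : ∀ m : ℕ, d < m → (cauchyPowerSeries f 0 1).coeff m = 0 :=
    fun m => cauchyPowerSeries_coeff_eq_zero hfg hc hd hg
  obtain ⟨p, hpc, hfp⟩ := exists_polynomial_eqOn_closedBall hf (N := d.toNat + 1)
    fun m hm => hvan m (by omega)
  have hpd : ∀ m : ℕ, d < m → p.coeff m = 0 := fun m hm => (hpc m).trans (hvan m hm)
  refine ⟨p, hpd, hfp, fun z hz => sub_eq_zero.1 ?_⟩
  refine eqOn_zero_of_exterior_of_isBigO_zpow (h := fun z => g z - p.eval z)
    (hc.sub p.continuous.continuousOn) (hd.sub p.differentiable.differentiableOn)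
    (hg.sub (isBigO_eval_zpow_of_coeff_eq_zero hpd)) (fun w hw => ?_) hz
  simp [← hfg hw, hfp (sphere_subset_closedBall hw)]

lemma _root_.Filter.Tendsto.matrix_inv {α 𝕜 ι : Type*} [NormedField 𝕜] [Fintype ι] [DecidableEq ι]
    {l : Filter α} {A : α → Matrix ι ι 𝕜} {L : Matrix ι ι 𝕜} (hA : Tendsto A l (𝓝 L))
    (hL : IsUnit L) : Tendsto (fun x => (A x)⁻¹) l (𝓝 L⁻¹) := by
  refine (continuousAt_matrix_inv L ?_).tendsto.comp hA
  rw [Ring.inverse_eq_inv']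
  exact continuousAt_inv₀ ((Matrix.isUnit_iff_isUnit_det L).1 hL).ne_zero

section MatrixAlgebra

variable {ι α : Type*} [Fintype ι] [DecidableEq ι] [CommRing α]

lemma inv_mul_mul_eq_mul_mul_inv {A A' B B' D D' : Matrix ι ι α} (hA : IsUnit A)
    (hB' : IsUnit B') (h : A * D * B = A' * D' * B') : A⁻¹ * A' * D' = D * (B * B'⁻¹) :=
  calc A⁻¹ * A' * D' = A⁻¹ * (A' * D' * B' * B'⁻¹) := by
        rw [Matrix.mul_nonsing_inv_cancel_right _ _ ((Matrix.isUnit_iff_isUnit_det _).1 hB'),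
          Matrix.mul_assoc]
    _ = A⁻¹ * (A * (D * (B * B'⁻¹))) := by rw [← h]; simp only [Matrix.mul_assoc]
    _ = D * (B * B'⁻¹) :=
        Matrix.nonsing_inv_mul_cancel_left _ _ ((Matrix.isUnit_iff_isUnit_det _).1 hA)

lemma eq_inv_mul_inv_mul_mul_of_mul_mul_eq {P D X Y : Matrix ι ι α} (hP : IsUnit P)
    (hD : IsUnit D) (h : P * D * X = D * Y) : X = D⁻¹ * P⁻¹ * D * Y := by
  rw [Matrix.mul_assoc, Matrix.mul_assoc, ← h, ← Matrix.mul_assoc, ← Matrix.mul_inv_rev]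
  exact (Matrix.nonsing_inv_mul_cancel_left _ _
    ((Matrix.isUnit_iff_isUnit_det _).1 (hP.mul hD))).symm

end MatrixAlgebra

variable {n : ℕ}

lemma det_eq_zero_of_zero_block {R : Type*} [CommRing R] (M : Matrix (Fin n) (Fin n) R)
    (r : Fin n) (hM : ∀ k j, r ≤ k → j ≤ r → M k j = 0) : M.det = 0 := by
  rw [Matrix.det_apply]
  refine Finset.sum_eq_zero fun σ _ => ?_
  -- `σ` cannot map the `r + 1` indices `j ≤ r` injectively into the `r` indices below `r`
  obtain ⟨j, hjr, hσj⟩ : ∃ j ≤ r, r ≤ σ j := by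
    by_contra! h
    simpa using Finset.card_le_card_of_injOn σ (s := Finset.Iic r) (t := Finset.Iio r)
      (fun j hj => Finset.mem_Iio.2 (h j (Finset.mem_Iic.1 hj))) σ.injective.injOn
  rw [Finset.prod_eq_zero (f := fun i => M (σ i) i) (Finset.mem_univ j) (hM _ _ hσj hjr),
    smul_zero]

lemma le_of_isUnit_of_antitone {R : Type*} [CommRing R] [Nontrivial R] {κ ν : Fin n → ℤ}
    (hκ : Antitone κ) (hν : Antitone ν) {M : Matrix (Fin n) (Fin n) R} (hM : IsUnit M)
    (hzero : ∀ k j, κ k < ν j → M k j = 0) (r : Fin n) : ν r ≤ κ r := by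
  by_contra! hr
  have hdet := det_eq_zero_of_zero_block M r fun k j hk hj =>
    hzero k j ((hκ hk).trans_lt (hr.trans_le (hν hj)))
  exact not_isUnit_zero (hdet ▸ (Matrix.isUnit_iff_isUnit_det M).1 hM)

lemma le_of_isUnit_eval_zero {κ ν : Fin n → ℤ} (hκ : Antitone κ) (hν : Antitone ν)
    {P : Fin n → Fin n → ℂ[X]} (hP : ∀ k j (m : ℕ), κ k - ν j < m → (P k j).coeff m = 0)
    (hu : IsUnit (Matrix.of fun k j => (P k j).eval 0)) (r : Fin n) : ν r ≤ κ r :=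
  le_of_isUnit_of_antitone hκ hν hu (fun k j h => by
    simpa [← coeff_zero_eq_eval_zero] using hP k j 0 (by simpa using h)) r

lemma degree_le_toNat_of_coeff_eq_zero {p : ℂ[X]} {d : ℤ}
    (h : ∀ m : ℕ, d < m → p.coeff m = 0) : p.degree ≤ d.toNat :=
  degree_le_iff_coeff_zero _ _ |>.2 fun m hm => h m <| by
    have : d.toNat < m := by exact_mod_cast hm
    omega

lemma diagZ_isUnit (κ : Fin n → ℤ) {z : ℂ} (hz : z ≠ 0) : IsUnit (diagZ n κ z) := by
  rw [Matrix.isUnit_iff_isUnit_det, diagZ, Matrix.det_diagonal]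
  exact (Finset.prod_ne_zero_iff.2 fun i _ => zpow_ne_zero _ hz).isUnit

lemma mul_diagZ_eq_diagZ_mul_iff {κ ν : Fin n → ℤ} {z : ℂ} (hz : z ≠ 0)
    {P B : Matrix (Fin n) (Fin n) ℂ} :
    P * diagZ n ν z = diagZ n κ z * B ↔ ∀ k j, P k j = z ^ (κ k - ν j) * B k j := by
  simp only [diagZ, Matrix.mul_diagonal, Matrix.diagonal_mul, ← Matrix.ext_iff]
  refine forall₂_congr fun k j => ?_
  rw [zpow_sub₀ hz, ← eq_div_iff (zpow_ne_zero _ hz)]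
  ring_nf

theorem exists_polynomial_of_mul_diagZ_eq {F B : ℂ → Matrix (Fin n) (Fin n) ℂ}
    {κ ν : Fin n → ℤ}
    (hF : ∀ k j, (fun z => F z k j) ∈ regularSubring (closedBall 0 1) (ball 0 1))
    (hB : ∀ k j, (fun z => B z k j) ∈ regularSubring {z | 1 ≤ ‖z‖} {z | 1 < ‖z‖})
    (hBbdd : ∀ k j, (fun z => B z k j) =O[cobounded ℂ] fun _ => (1 : ℂ))
    (hFB : ∀ z : ℂ, ‖z‖ = 1 → F z * diagZ n ν z = diagZ n κ z * B z) :
    ∃ P : Fin n → Fin n → ℂ[X], (∀ k j (m : ℕ), κ k - ν j < m → (P k j).coeff m = 0) ∧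
      (∀ z ∈ closedBall (0 : ℂ) 1, (Matrix.of fun k j => (P k j).eval z) = F z) ∧
      ∀ z : ℂ, 1 ≤ ‖z‖ →
        (Matrix.of fun k j => (P k j).eval z) * diagZ n ν z = diagZ n κ z * B z := by
  have hentry : ∀ k j, ∃ p : ℂ[X], (∀ m : ℕ, κ k - ν j < m → p.coeff m = 0) ∧
      EqOn (fun z => F z k j) p.eval (closedBall 0 1) ∧
      EqOn (fun z => z ^ (κ k - ν j) * B z k j) p.eval {z | 1 ≤ ‖z‖} := by
    intro k j
    have hg := (regularSubring _ _).mul_mem (zpow_mem_regularSubring (κ k - ν j)) (hB k j)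
    refine exists_polynomial_of_eqOn_sphere
      ⟨(hF k j).2, by rw [closure_ball _ one_ne_zero]; exact (hF k j).1⟩ hg.1 hg.2 ?_ ?_
    · simpa using (isBigO_refl (fun z : ℂ => z ^ (κ k - ν j)) _).mul (hBbdd k j)
    · intro z hz
      rw [mem_sphere_zero_iff_norm] at hz
      exact (mul_diagZ_eq_diagZ_mul_iff (ne_zero_of_one_le_norm hz.ge)).1 (hFB z hz) k j
  choose P hPcoeff hPF hPB using hentry
  exact ⟨P, hPcoeff, fun z hz => Matrix.ext fun k j => (hPF k j hz).symm,
    fun z hz => (mul_diagZ_eq_diagZ_mul_iff (ne_zero_of_one_le_norm hz)).2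
      fun k j => (hPB k j hz).symm⟩

structure IsPlusFactor (A : ℂ → Matrix (Fin n) (Fin n) ℂ) : Prop where
  entry_mem : ∀ i j, (fun z => A z i j) ∈ regularSubring (closedBall 0 1) (ball 0 1)
  isUnit : ∀ z ∈ closedBall (0 : ℂ) 1, IsUnit (A z)

structure IsMinusFactor (A : ℂ → Matrix (Fin n) (Fin n) ℂ) (L : Matrix (Fin n) (Fin n) ℂ) :
    Prop where
  entry_mem : ∀ i j, (fun z => A z i j) ∈ regularSubring {z | 1 ≤ ‖z‖} {z | 1 < ‖z‖}
  isUnit : ∀ z : ℂ, 1 ≤ ‖z‖ → IsUnit (A z)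
  tendsto : Tendsto A (cobounded ℂ) (𝓝 L)
  isUnit_limit : IsUnit L

theorem exists_polynomial_transition {Ap Atp Am Atm : ℂ → Matrix (Fin n) (Fin n) ℂ}
    {L Lt : Matrix (Fin n) (Fin n) ℂ} {κ ν : Fin n → ℤ} (hAp : IsPlusFactor Ap)
    (hAtp : IsPlusFactor Atp) (hAm : IsMinusFactor Am L) (hAtm : IsMinusFactor Atm Lt)
    (heq : ∀ z : ℂ, ‖z‖ = 1 → Ap z * diagZ n κ z * Am z = Atp z * diagZ n ν z * Atm z) :
    ∃ P : Fin n → Fin n → ℂ[X], (∀ k j (m : ℕ), κ k - ν j < m → (P k j).coeff m = 0) ∧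
      (∀ z, IsUnit (Matrix.of fun k j => (P k j).eval z)) ∧
      (∀ z ∈ closedBall (0 : ℂ) 1, Atp z = Ap z * Matrix.of fun k j => (P k j).eval z) ∧
      ∀ z : ℂ, 1 ≤ ‖z‖ →
        (Matrix.of fun k j => (P k j).eval z) * diagZ n ν z * Atm z = diagZ n κ z * Am z := by
  have hBlim := hAm.tendsto.mul (hAtm.tendsto.matrix_inv hAtm.isUnit_limit)
  obtain ⟨P, hPcoeff, hPF, hPB⟩ := exists_polynomial_of_mul_diagZ_eq
    (F := fun z => (Ap z)⁻¹ * Atp z) (B := fun z => Am z * (Atm z)⁻¹)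
    (mul_fun_mem (nonsing_inv_fun_mem_regularSubring hAp.entry_mem ball_subset_closedBall
      hAp.isUnit) hAtp.entry_mem)
    (mul_fun_mem hAm.entry_mem (nonsing_inv_fun_mem_regularSubring hAtm.entry_mem
      (ofPred_subset_ofPred.2 fun _ => le_of_lt) hAtm.isUnit))
    (fun k j => ((hBlim.apply_nhds k).apply_nhds j).isBigO_one ℂ)
    (fun z hz => inv_mul_mul_eq_mul_mul_inv (hAp.isUnit z (by simp [hz])) (hAtm.isUnit z hz.ge)
      (heq z hz))
  refine ⟨P, hPcoeff, fun z => ?_, fun z hz => ?_, fun z hz => ?_⟩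
  · rcases le_total ‖z‖ 1 with hz | hz
    · have hz : z ∈ closedBall (0 : ℂ) 1 := mem_closedBall_zero_iff.2 hz
      rw [hPF z hz]
      exact (Matrix.isUnit_nonsing_inv_iff.2 (hAp.isUnit z hz)).mul (hAtp.isUnit z hz)
    · refine isUnit_of_mul_isUnit_left (y := diagZ n ν z) ?_
      rw [hPB z hz]
      exact (diagZ_isUnit κ (ne_zero_of_one_le_norm hz)).mul
        ((hAm.isUnit z hz).mul (Matrix.isUnit_nonsing_inv_iff.2 (hAtm.isUnit z hz)))
  · rw [hPF z hz]
    exact (Matrix.mul_nonsing_inv_cancel_left _ _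
      ((Matrix.isUnit_iff_isUnit_det _).1 (hAp.isUnit z hz))).symm
  · rw [hPB z hz, Matrix.mul_assoc]
    exact congrArg _ (Matrix.nonsing_inv_mul_cancel_right _ _
      ((Matrix.isUnit_iff_isUnit_det _).1 (hAtm.isUnit z hz)))

end Birkhoff

theorem stmt_2 (n : ℕ)
    (Ap Atp Am Atm : ℂ → Matrix (Fin n) (Fin n) ℂ)
    (Linf Ltinf : Matrix (Fin n) (Fin n) ℂ)
    (κ ν : Fin n → ℤ) (hκ : Antitone κ) (hν : Antitone ν)
    (hApc : ∀ i j, ContinuousOn (fun z => Ap z i j) (closedBall 0 1))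
    (hApd : ∀ i j, DifferentiableOn ℂ (fun z => Ap z i j) (ball 0 1))
    (hApu : ∀ z ∈ closedBall (0 : ℂ) 1, IsUnit (Ap z))
    (hAtpc : ∀ i j, ContinuousOn (fun z => Atp z i j) (closedBall 0 1))
    (hAtpd : ∀ i j, DifferentiableOn ℂ (fun z => Atp z i j) (ball 0 1))
    (hAtpu : ∀ z ∈ closedBall (0 : ℂ) 1, IsUnit (Atp z))
    (hAmc : ∀ i j, ContinuousOn (fun z => Am z i j) {z : ℂ | 1 ≤ ‖z‖})
    (hAmd : ∀ i j, DifferentiableOn ℂ (fun z => Am z i j) {z : ℂ | 1 < ‖z‖})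
    (hAmu : ∀ z : ℂ, 1 ≤ ‖z‖ → IsUnit (Am z))
    (hAml : ∀ i j, Tendsto (fun z => Am z i j)
      (comap (fun z : ℂ => ‖z‖) atTop) (nhds (Linf i j)))
    (hLu : IsUnit Linf)
    (hAtmc : ∀ i j, ContinuousOn (fun z => Atm z i j) {z : ℂ | 1 ≤ ‖z‖})
    (hAtmd : ∀ i j, DifferentiableOn ℂ (fun z => Atm z i j) {z : ℂ | 1 < ‖z‖})
    (hAtmu : ∀ z : ℂ, 1 ≤ ‖z‖ → IsUnit (Atm z))
    (hAtml : ∀ i j, Tendsto (fun z => Atm z i j)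
      (comap (fun z : ℂ => ‖z‖) atTop) (nhds (Ltinf i j)))
    (hLtu : IsUnit Ltinf)
    (heq : ∀ z : ℂ, ‖z‖ = 1 →
      Ap z * diagZ n κ z * Am z = Atp z * diagZ n ν z * Atm z) :
    κ = ν ∧
    ∃ p : Fin n → Fin n → Polynomial ℂ,
      (∀ z : ℂ, IsUnit (Matrix.of fun k j => (p k j).eval z)) ∧
      (∀ z ∈ closedBall (0 : ℂ) 1,
        Atp z = Ap z * Matrix.of fun k j => (p k j).eval z) ∧
      (∀ z : ℂ, 1 ≤ ‖z‖ → Atm z =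
        (diagZ n κ z)⁻¹ * (Matrix.of fun k j => (p k j).eval z)⁻¹ * diagZ n κ z * Am z) ∧
      (∀ k j, κ k < κ j → p k j = 0) ∧
      (∀ k j, κ k = κ j → (p k j).degree ≤ 0) ∧
      (∀ k j, κ j < κ k → (p k j).degree ≤ ((κ k - κ j).toNat : ℕ)) := by
  have hAp : Birkhoff.IsPlusFactor Ap := ⟨fun i j => ⟨hApc i j, hApd i j⟩, hApu⟩
  have hAtp : Birkhoff.IsPlusFactor Atp := ⟨fun i j => ⟨hAtpc i j, hAtpd i j⟩, hAtpu⟩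
  have hAm : Birkhoff.IsMinusFactor Am Linf := ⟨fun i j => ⟨hAmc i j, hAmd i j⟩, hAmu,
    tendsto_pi_nhds.2 fun i => tendsto_pi_nhds.2 fun j => by simpa using hAml i j, hLu⟩
  have hAtm : Birkhoff.IsMinusFactor Atm Ltinf := ⟨fun i j => ⟨hAtmc i j, hAtmd i j⟩, hAtmu,
    tendsto_pi_nhds.2 fun i => tendsto_pi_nhds.2 fun j => by simpa using hAtml i j, hLtu⟩
  obtain ⟨P, hPcoeff, hPu, hPp, hPm⟩ :=
    Birkhoff.exists_polynomial_transition hAp hAtp hAm hAtm heq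
  obtain ⟨Q, hQcoeff, hQu, -, -⟩ :=
    Birkhoff.exists_polynomial_transition hAtp hAp hAtm hAm fun z hz => (heq z hz).symm
  obtain rfl : κ = ν := funext fun r => le_antisymm
    (Birkhoff.le_of_isUnit_eval_zero hν hκ hQcoeff (hQu 0) r)
    (Birkhoff.le_of_isUnit_eval_zero hκ hν hPcoeff (hPu 0) r)
  refine ⟨rfl, P, hPu, hPp, fun z hz => ?_, fun k j h => ?_, fun k j h => ?_, fun k j h => ?_⟩
  · exact Birkhoff.eq_inv_mul_inv_mul_mul_of_mul_mul_eq (hPu z)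
      (Birkhoff.diagZ_isUnit κ (Birkhoff.ne_zero_of_one_le_norm hz)) (hPm z hz)
  · exact Polynomial.ext fun m => hPcoeff k j m (by omega)
  · simpa [h] using Birkhoff.degree_le_toNat_of_coeff_eq_zero (hPcoeff k j)
  · exact Birkhoff.degree_le_toNat_of_coeff_eq_zero (hPcoeff k j)
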